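/- Let u(t,x) = U(x, x·e − ct) be a pulsating travelling front connecting periodic steady states q₁ > q₂ with speed c ∈ ℝ in direction e ∈ S^{N-1}, where U(x,z) is periodic in x and U(x, x·e − ct) is uniformly continuous in (t,x), and U(x, z) → q₁(x) (resp. q₂(x)) pointwise as z → −∞ (resp. +∞). Then u(t,x) converges to q₁(x) as x·e → −∞ and to q₂(x) as x·e → +∞, locally uniformly in t. -/
import Mathlib


open scoped RealInnerProductSpace
open Real Filter Topology

noncomputable section

/-- The vector of `ℝ^N` with integer coordinates `k`. -/
def intVec (N : ℕ) (k : Fin N → ℤ) : EuclideanSpace ℝ (Fin N) :=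
  (EuclideanSpace.equiv (Fin N) ℝ).symm (fun i => (k i : ℝ))

/-- A function on `ℝ^N` is (spatially) periodic if it is invariant under translations
by vectors of `ℤ^N`. -/
def IsPeriodic {N : ℕ} (u : EuclideanSpace ℝ (Fin N) → ℝ) : Prop :=
  ∀ (k : Fin N → ℤ) (x : EuclideanSpace ℝ (Fin N)), u (x + intVec N k) = u x

/-- `j`-th component of the gradient of `u`. -/
def gradv {N : ℕ} (u : EuclideanSpace ℝ (Fin N) → ℝ) (x : EuclideanSpace ℝ (Fin N))
    (j : Fin N) : ℝ :=
  fderiv ℝ u x (EuclideanSpace.single j 1)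

/-- The elliptic operator `div (A(x) ∇u)` in coordinates. -/
def divAgrad {N : ℕ} (A : EuclideanSpace ℝ (Fin N) → Matrix (Fin N) (Fin N) ℝ)
    (u : EuclideanSpace ℝ (Fin N) → ℝ) (x : EuclideanSpace ℝ (Fin N)) : ℝ :=
  ∑ i, fderiv ℝ (fun y => ∑ j, A y i j * gradv u y j) x (EuclideanSpace.single i 1)

/-- Uniform ellipticity: `C₁|ξ|² ≤ ∑ A_{ij}(x) ξ_i ξ_j ≤ C₂|ξ|²`. -/
def UniformlyElliptic {N : ℕ} (A : EuclideanSpace ℝ (Fin N) → Matrix (Fin N) (Fin N) ℝ)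
    (C₁ C₂ : ℝ) : Prop :=
  0 < C₁ ∧ 0 < C₂ ∧ ∀ (x ξ : EuclideanSpace ℝ (Fin N)),
    C₁ * ‖ξ‖ ^ 2 ≤ ∑ i, ∑ j, A x i j * ξ i * ξ j ∧
    (∑ i, ∑ j, A x i j * ξ i * ξ j) ≤ C₂ * ‖ξ‖ ^ 2

/-- A periodic steady state of `∂ₜu = div(A∇u) + f(x,u)`. -/
def IsSteadyState {N : ℕ} (A : EuclideanSpace ℝ (Fin N) → Matrix (Fin N) (Fin N) ℝ)
    (f : EuclideanSpace ℝ (Fin N) → ℝ → ℝ) (q : EuclideanSpace ℝ (Fin N) → ℝ) : Prop :=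
  ContDiff ℝ 2 q ∧ IsPeriodic q ∧ ∀ x, divAgrad A q x + f x (q x) = 0

/-- `(lam, φ)` is the periodic principal eigenpair of the linearisation of the equation
around the steady state `q`: `div(A∇φ) + ∂ᵤf(x, q(x)) φ = lam φ`, with `φ` periodic and
positive. -/
def IsPrincipalEigenpair {N : ℕ} (A : EuclideanSpace ℝ (Fin N) → Matrix (Fin N) (Fin N) ℝ)
    (f : EuclideanSpace ℝ (Fin N) → ℝ → ℝ) (q : EuclideanSpace ℝ (Fin N) → ℝ)
    (lam : ℝ) (φ : EuclideanSpace ℝ (Fin N) → ℝ) : Prop :=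
  ContDiff ℝ 2 φ ∧ IsPeriodic φ ∧ (∀ x, 0 < φ x) ∧
    ∀ x, divAgrad A φ x + deriv (f x) (q x) * φ x = lam * φ x

/-- Linear stability: the periodic principal eigenvalue of the linearisation is negative. -/
def LinearlyStable {N : ℕ} (A : EuclideanSpace ℝ (Fin N) → Matrix (Fin N) (Fin N) ℝ)
    (f : EuclideanSpace ℝ (Fin N) → ℝ → ℝ) (q : EuclideanSpace ℝ (Fin N) → ℝ) : Prop :=
  ∃ lam φ, lam < 0 ∧ IsPrincipalEigenpair A f q lam φ

/-- Linear instability: the periodic principal eigenvalue of the linearisation is positive. -/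
def LinearlyUnstable {N : ℕ} (A : EuclideanSpace ℝ (Fin N) → Matrix (Fin N) (Fin N) ℝ)
    (f : EuclideanSpace ℝ (Fin N) → ℝ → ℝ) (q : EuclideanSpace ℝ (Fin N) → ℝ) : Prop :=
  ∃ lam φ, 0 < lam ∧ IsPrincipalEigenpair A f q lam φ

/-- A (classical, globally defined in time) solution of `∂ₜu = div(A∇u) + f(x,u)`. -/
def IsSolution {N : ℕ} (A : EuclideanSpace ℝ (Fin N) → Matrix (Fin N) (Fin N) ℝ)
    (f : EuclideanSpace ℝ (Fin N) → ℝ → ℝ) (u : ℝ → EuclideanSpace ℝ (Fin N) → ℝ) : Prop :=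
  (∀ x, Differentiable ℝ (fun t => u t x)) ∧
    ∀ t x, deriv (fun s => u s x) t = divAgrad A (u t) x + f x (u t x)

/-- A supersolution of `∂ₜu = div(A∇u) + f(x,u)`. -/
def IsSupersolution {N : ℕ} (A : EuclideanSpace ℝ (Fin N) → Matrix (Fin N) (Fin N) ℝ)
    (f : EuclideanSpace ℝ (Fin N) → ℝ → ℝ) (u : ℝ → EuclideanSpace ℝ (Fin N) → ℝ) : Prop :=
  (∀ x, Differentiable ℝ (fun t => u t x)) ∧
    ∀ t x, divAgrad A (u t) x + f x (u t x) ≤ deriv (fun s => u s x) t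

/-- A generalised supersolution: the pointwise minimum of two supersolutions. -/
def IsGeneralizedSupersolution {N : ℕ}
    (A : EuclideanSpace ℝ (Fin N) → Matrix (Fin N) (Fin N) ℝ)
    (f : EuclideanSpace ℝ (Fin N) → ℝ → ℝ) (u : ℝ → EuclideanSpace ℝ (Fin N) → ℝ) : Prop :=
  ∃ v w, IsSupersolution A f v ∧ IsSupersolution A f w ∧ ∀ t x, u t x = min (v t x) (w t x)

/-- A pulsating travelling front with profile `U`, speed `c`, direction `e`, connecting
`q₁` (at `-∞`) to `q₂` (at `+∞`): `u(t,x) = U(x, x·e - ct)` is an entire solution, `U` is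
periodic in its first variable, `q₂ < U < q₁`, with the corresponding limits. -/
def IsPulsatingFront {N : ℕ} (A : EuclideanSpace ℝ (Fin N) → Matrix (Fin N) (Fin N) ℝ)
    (f : EuclideanSpace ℝ (Fin N) → ℝ → ℝ) (e : EuclideanSpace ℝ (Fin N)) (c : ℝ)
    (U : EuclideanSpace ℝ (Fin N) → ℝ → ℝ) (q₁ q₂ : EuclideanSpace ℝ (Fin N) → ℝ) : Prop :=
  (∀ (k : Fin N → ℤ) (x : EuclideanSpace ℝ (Fin N)) (z : ℝ), U (x + intVec N k) z = U x z) ∧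
  IsSolution A f (fun t x => U x (⟪x, e⟫ - c * t)) ∧
  (∀ x z, q₂ x < U x z ∧ U x z < q₁ x) ∧
  (∀ x, Tendsto (U x) atBot (nhds (q₁ x))) ∧
  (∀ x, Tendsto (U x) atTop (nhds (q₂ x)))

lemma intVec_apply (N : ℕ) (k : Fin N → ℤ) (i : Fin N) : intVec N k i = (k i : ℝ) := rfl

lemma aux_limit {N : ℕ} (e : EuclideanSpace ℝ (Fin N)) (he : ‖e‖ = 1) (c : ℝ)
    (q : EuclideanSpace ℝ (Fin N) → ℝ) (hqc : Continuous q)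
    (hqp : ∀ (k : Fin N → ℤ) (x : EuclideanSpace ℝ (Fin N)), q (x + intVec N k) = q x)
    (U : EuclideanSpace ℝ (Fin N) → ℝ → ℝ)
    (hUper : ∀ (k : Fin N → ℤ) (x : EuclideanSpace ℝ (Fin N)) (z : ℝ),
      U (x + intVec N k) z = U x z)
    (hUC : UniformContinuous (fun p : ℝ × EuclideanSpace ℝ (Fin N) =>
      U p.2 (⟪p.2, e⟫ - c * p.1)))
    (hlim : ∀ x, Tendsto (U x) atBot (nhds (q x)))
    (ε : ℝ) (hε : 0 < ε) (a b : ℝ) :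
    ∃ R : ℝ, ∀ t ∈ Set.Icc a b, ∀ x : EuclideanSpace ℝ (Fin N), ⟪x, e⟫ ≤ R →
      |U x (⟪x, e⟫ - c * t) - q x| ≤ ε := by
  by_contra hcon
  push_neg at hcon
  choose t ht x hx hfar using fun n : ℕ => hcon (-(n : ℝ))
  set k : ℕ → Fin N → ℤ := fun n i => ⌊x n i⌋ with hk
  set ξ : ℕ → EuclideanSpace ℝ (Fin N) := fun n => x n - intVec N (k n) with hξdef
  have hdecomp : ∀ n, x n = ξ n + intVec N (k n) := fun n => by simp [hξdef]
  have hξcoord : ∀ n i, ξ n i = Int.fract (x n i) := by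
    intro n i
    show x n i - intVec N (k n) i = _
    rw [intVec_apply, Int.fract]
  have hξnorm : ∀ n, ‖ξ n‖ ≤ Real.sqrt N := by
    intro n
    rw [EuclideanSpace.norm_eq]
    apply Real.sqrt_le_sqrt
    calc ∑ i, ‖ξ n i‖ ^ 2 ≤ ∑ _i : Fin N, 1 := by
          apply Finset.sum_le_sum
          intro i _
          have h0 : (0:ℝ) ≤ ξ n i := by rw [hξcoord]; exact Int.fract_nonneg _
          have h1 : ξ n i ≤ 1 := by rw [hξcoord]; exact le_of_lt (Int.fract_lt_one _)
          rw [Real.norm_eq_abs, abs_of_nonneg h0]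
          exact pow_le_one₀ h0 h1
      _ = (N : ℝ) := by simp
  obtain ⟨ξ0, hξ0, φ, hφ, hconv⟩ :=
    tendsto_subseq_of_bounded (Metric.isBounded_closedBall
      (x := (0 : EuclideanSpace ℝ (Fin N))) (r := Real.sqrt N))
      (x := ξ) (fun n => by simpa [Metric.mem_closedBall, dist_zero_right] using hξnorm n)
  have hξ0norm : ‖ξ0‖ ≤ Real.sqrt N := by
    rw [Metric.isClosed_closedBall.closure_eq] at hξ0
    simpa [Metric.mem_closedBall, dist_zero_right] using hξ0
  set g : ℝ × EuclideanSpace ℝ (Fin N) → ℝ := fun p => U p.2 (⟪p.2, e⟫ - c * p.1) with hg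
  set T : ℕ → ℝ := fun n => t (φ n) with hT
  set X : ℕ → EuclideanSpace ℝ (Fin N) := fun n => x (φ n) with hX
  set Ξ : ℕ → EuclideanSpace ℝ (Fin N) := fun n => ξ (φ n) with hΞ
  set Y : ℕ → EuclideanSpace ℝ (Fin N) := fun n => ξ0 + intVec N (k (φ n)) with hY
  set W : ℕ → ℝ := fun n => ⟪Y n, e⟫ - c * T n with hW
  have hXY : ∀ n, X n - Y n = Ξ n - ξ0 := by
    intro n
    rw [hX, hY, hΞ]
    simp only
    rw [hdecomp (φ n)]
    abel
  have hconv' : Tendsto Ξ atTop (nhds ξ0) := hconv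
  -- T1
  have hT1 : Tendsto (fun n => g (T n, X n) - g (T n, Y n)) atTop (nhds 0) := by
    rw [NormedAddCommGroup.tendsto_nhds_zero]
    intro ε' hε'
    obtain ⟨δ, hδ, hδ'⟩ := Metric.uniformContinuous_iff.mp hUC ε' hε'
    have hev : ∀ᶠ n in atTop, dist (Ξ n) ξ0 < δ := Metric.tendsto_nhds.mp hconv' δ hδ
    filter_upwards [hev] with n hn
    have hd : dist ((T n, X n) : ℝ × EuclideanSpace ℝ (Fin N)) (T n, Y n) < δ := by
      rw [Prod.dist_eq]
      simp only [dist_self]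
      rw [max_eq_right dist_nonneg]
      calc dist (X n) (Y n) = dist (Ξ n) ξ0 := by
            rw [dist_eq_norm, dist_eq_norm, hXY n]
        _ < δ := hn
    have := hδ' hd
    rwa [Real.dist_eq, ← Real.norm_eq_abs] at this
  -- T2 : W → atBot
  have hTabs : ∀ n, |T n| ≤ |a| + |b| := by
    intro n
    have h1 := (ht (φ n)).1
    have h2 := (ht (φ n)).2
    rw [abs_le]
    constructor
    · calc -(|a| + |b|) ≤ -|a| := by
            have := abs_nonneg b; linarith
        _ ≤ a := neg_abs_le a
        _ ≤ T n := h1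
    · calc T n ≤ b := h2
        _ ≤ |b| := le_abs_self b
        _ ≤ |a| + |b| := by have := abs_nonneg a; linarith
  have hWle : ∀ n, W n ≤ -(n : ℝ) + (2 * Real.sqrt N + |c| * (|a| + |b|)) := by
    intro n
    have hYinner : ⟪Y n, e⟫ = ⟪X n, e⟫ + ⟪ξ0 - Ξ n, e⟫ := by
      have : Y n = X n + (ξ0 - Ξ n) := by
        rw [hY, hX, hΞ]; simp only; rw [hdecomp (φ n)]; abel
      rw [this, inner_add_left]
    have h1 : ⟪X n, e⟫ ≤ -(n : ℝ) := by
      calc ⟪X n, e⟫ ≤ -((φ n : ℕ) : ℝ) := hx (φ n)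
        _ ≤ -(n : ℝ) := by
            have : (n : ℝ) ≤ ((φ n : ℕ) : ℝ) := by exact_mod_cast hφ.le_apply
            linarith
    have h2 : ⟪ξ0 - Ξ n, e⟫ ≤ 2 * Real.sqrt N := by
      calc ⟪ξ0 - Ξ n, e⟫ ≤ ‖ξ0 - Ξ n‖ * ‖e‖ := real_inner_le_norm _ _
        _ = ‖ξ0 - Ξ n‖ := by rw [he, mul_one]
        _ ≤ ‖ξ0‖ + ‖Ξ n‖ := norm_sub_le _ _
        _ ≤ Real.sqrt N + Real.sqrt N := add_le_add hξ0norm (hξnorm (φ n))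
        _ = 2 * Real.sqrt N := by ring
    have h3 : -(c * T n) ≤ |c| * (|a| + |b|) := by
      calc -(c * T n) ≤ |c * T n| := neg_le_abs _
        _ = |c| * |T n| := abs_mul _ _
        _ ≤ |c| * (|a| + |b|) := by
            exact mul_le_mul_of_nonneg_left (hTabs n) (abs_nonneg c)
    rw [hW]
    simp only
    rw [hYinner]
    linarith
  have hWbot : Tendsto W atTop atBot := by
    apply tendsto_atBot_mono hWle
    apply tendsto_atBot_add_const_right
    exact tendsto_neg_atTop_atBot.comp tendsto_natCast_atTop_atTop
  -- T2
  have hT2 : Tendsto (fun n => U ξ0 (W n) - q ξ0) atTop (nhds 0) := by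
    have h := ((hlim ξ0).comp hWbot).sub_const (q ξ0)
    rwa [sub_self] at h
  -- T3
  have hT3 : Tendsto (fun n => q ξ0 - q (Ξ n)) atTop (nhds 0) := by
    have h1 : Tendsto (fun n => q (Ξ n)) atTop (nhds (q ξ0)) :=
      (hqc.tendsto ξ0).comp hconv'
    have h := (tendsto_const_nhds (x := q ξ0)).sub h1
    rwa [sub_self] at h
  -- combine
  have hsum : Tendsto (fun n => U (X n) (⟪X n, e⟫ - c * T n) - q (X n)) atTop (nhds 0) := by
    have h := (hT1.add hT2).add hT3
    rw [add_zero, add_zero] at h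
    apply h.congr
    intro n
    have e1 : g (T n, Y n) = U ξ0 (W n) := by
      show U (Y n) (⟪Y n, e⟫ - c * T n) = U ξ0 (W n)
      rw [hW]
      simp only
      rw [hY]
      simp only
      rw [hUper]
    have e2 : q (X n) = q (Ξ n) := by
      rw [hX]
      simp only
      rw [hdecomp (φ n)]
      exact hqp _ _
    have e3 : g (T n, X n) = U (X n) (⟪X n, e⟫ - c * T n) := rfl
    rw [e1, e2, e3]
    ring
  have hev := NormedAddCommGroup.tendsto_nhds_zero.mp hsum ε hε
  obtain ⟨n, hn⟩ := hev.exists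
  rw [Real.norm_eq_abs] at hn
  exact lt_asymm hn (hfar (φ n))

/-- Proposition 2.4: let `u(t,x) = U(x, x·e - ct)` be a pulsating travelling front
connecting the periodic steady states `q₁ > q₂` with speed `c` in direction `e`, with `U`
periodic in its first variable, `(t,x) ↦ U(x, x·e - ct)` uniformly continuous, and pointwise
limits `U(x, z) → q₁(x)` as `z → -∞`, `U(x, z) → q₂(x)` as `z → +∞`. Then `u(t,x)` converges
to `q₁(x)` as `x·e → -∞` and to `q₂(x)` as `x·e → +∞`, locally uniformly in `t`. -/
theorem pulsating_front_uniform_limits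
    (N : ℕ) (A : EuclideanSpace ℝ (Fin N) → Matrix (Fin N) (Fin N) ℝ)
    (f : EuclideanSpace ℝ (Fin N) → ℝ → ℝ)
    (e : EuclideanSpace ℝ (Fin N)) (he : ‖e‖ = 1) (c : ℝ)
    (q₁ q₂ : EuclideanSpace ℝ (Fin N) → ℝ)
    (hq₁ : IsSteadyState A f q₁) (hq₂ : IsSteadyState A f q₂)
    (horder : ∀ x, q₂ x < q₁ x)
    (U : EuclideanSpace ℝ (Fin N) → ℝ → ℝ)
    (hUper : ∀ (k : Fin N → ℤ) (x : EuclideanSpace ℝ (Fin N)) (z : ℝ),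
      U (x + intVec N k) z = U x z)
    (hsol : IsSolution A f (fun t x => U x (⟪x, e⟫ - c * t)))
    (hbetween : ∀ x z, q₂ x < U x z ∧ U x z < q₁ x)
    (hUC : UniformContinuous (fun p : ℝ × EuclideanSpace ℝ (Fin N) =>
      U p.2 (⟪p.2, e⟫ - c * p.1)))
    (hlim1 : ∀ x, Tendsto (U x) atBot (nhds (q₁ x)))
    (hlim2 : ∀ x, Tendsto (U x) atTop (nhds (q₂ x))) :
    (∀ ε > (0 : ℝ), ∀ a b : ℝ, ∃ R : ℝ, ∀ t ∈ Set.Icc a b,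
      ∀ x : EuclideanSpace ℝ (Fin N), ⟪x, e⟫ ≤ R →
        |U x (⟪x, e⟫ - c * t) - q₁ x| ≤ ε) ∧
    (∀ ε > (0 : ℝ), ∀ a b : ℝ, ∃ R : ℝ, ∀ t ∈ Set.Icc a b,
      ∀ x : EuclideanSpace ℝ (Fin N), R ≤ ⟪x, e⟫ →
        |U x (⟪x, e⟫ - c * t) - q₂ x| ≤ ε) := by
  constructor
  · intro ε hε a b
    exact aux_limit e he c q₁ hq₁.1.continuous hq₁.2.1 U hUper hUC hlim1 ε hε a b
  · intro ε hε a b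
    have hUC' : UniformContinuous (fun p : ℝ × EuclideanSpace ℝ (Fin N) =>
        (fun x z => U x (-z)) p.2 (⟪p.2, -e⟫ - (-c) * p.1)) := by
      have hfun : (fun p : ℝ × EuclideanSpace ℝ (Fin N) =>
          (fun x z => U x (-z)) p.2 (⟪p.2, -e⟫ - (-c) * p.1))
          = fun p : ℝ × EuclideanSpace ℝ (Fin N) => U p.2 (⟪p.2, e⟫ - c * p.1) := by
        funext p
        simp only
        congr 1
        rw [inner_neg_right]
        ring
      rw [hfun]
      exact hUC
    obtain ⟨R, hR⟩ := aux_limit (-e) (by rw [norm_neg, he]) (-c) q₂ hq₂.1.continuous hq₂.2.1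
      (fun x z => U x (-z)) (fun k x z => hUper k x (-z)) hUC'
      (fun x => (hlim2 x).comp tendsto_neg_atBot_atTop) ε hε a b
    refine ⟨-R, fun t htmem x hxe => ?_⟩
    have h := hR t htmem x (by rw [inner_neg_right]; linarith)
    have heq : -(⟪x, -e⟫ - (-c) * t) = ⟪x, e⟫ - c * t := by
      rw [inner_neg_right]; ring
    rwa [heq] at h
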